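/- arXiv:1403.7975 — 6 statements merged into one kernel-verified Lean document; each statement's English description precedes it below -/
import Mathlib

section
/- For every integer d ≥ 2, the (d-2)-nd iterated backward difference of the monomial x^d satisfies (D^{d-2} f)(x) = (d!/24)(12x² - 12(d-2)x + 3d² - 11d + 10) for all real x, where f(x) = x^d. -/
/-- Backward difference operator: `(D f)(x) = f x - f (x-1)`. -/
noncomputable def bdiff (f : ℝ → ℝ) : ℝ → ℝ := fun x => f x - f (x - 1)

/-!
The backward difference is a shifted forward difference: `D^[n] f x = Δ^[n] f (x - n)`.
For `Δ` the Leibniz rule `Δ^[n+1] (y ↦ y * f y) x = x * Δ^[n+1] f x + (n+1) * Δ^[n] f (x + 1)`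
raises the exponent of a monomial and the order of the difference together, so starting from
`Δ^[n] yⁿ = n!` the values of `Δ^[n] yⁿ⁺¹` and then of `Δ^[n] yⁿ⁺²` follow by induction on `n`.
-/

open fwdDiff Nat

theorem iterate_bdiff_eq_fwdDiff_iter (f : ℝ → ℝ) (n : ℕ) (x : ℝ) :
    bdiff^[n] f x = (Δ_[1])^[n] f (x - n) := by
  induction n generalizing f with
  | zero => simp
  | succ n ih =>
    have hshift : bdiff f = fun y => Δ_[1] f (y + -1) := by
      funext y
      simp [bdiff, fwdDiff, sub_eq_add_neg]
    rw [Function.iterate_succ_apply, ih, hshift, fwdDiff_iter_comp_add,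
      Function.iterate_succ_apply, Nat.cast_succ, sub_add_eq_sub_sub, sub_eq_add_neg (x - n)]

section Leibniz

variable {R : Type*} [CommRing R]

theorem fwdDiff_iter_succ_mul_id (f : R → R) (n : ℕ) (x : R) :
    (Δ_[1])^[n + 1] (fun y => y * f y) x =
      x * (Δ_[1])^[n + 1] f x + (n + 1) * (Δ_[1])^[n] f (x + 1) := by
  induction n generalizing f with
  | zero =>
    simp only [zero_add, Function.iterate_one, Function.iterate_zero, id_eq, fwdDiff, cast_zero]
    ring
  | succ n ih =>
    have hstep : Δ_[1] (fun y => y * f y) = (fun y => y * Δ_[1] f y) + fun y => f (y + 1) := by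
      funext y
      simp only [fwdDiff, Pi.add_apply]
      ring
    rw [Function.iterate_succ_apply, hstep, fwdDiff_iter_add, Pi.add_apply, ih,
      fwdDiff_iter_comp_add, ← Function.iterate_succ_apply, ← Function.iterate_succ_apply]
    push_cast
    ring

end Leibniz

variable {K : Type*} [Field K] [CharZero K]

theorem fwdDiff_iter_pow_succ (n : ℕ) (x : K) :
    (Δ_[1])^[n] (fun y => y ^ (n + 1)) x = (n + 1)! * (x + n / 2) := by
  induction n generalizing x with
  | zero => simp
  | succ n ih =>
    simp_rw [pow_succ' _ (n + 1)]
    rw [fwdDiff_iter_succ_mul_id, ih, fwdDiff_iter_eq_factorial, Pi.natCast_apply]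
    push_cast [factorial_succ]
    ring

theorem fwdDiff_iter_pow_add_two (n : ℕ) (x : K) :
    (Δ_[1])^[n] (fun y => y ^ (n + 2)) x =
      (n + 2)! / 24 * (12 * x ^ 2 + 12 * n * x + 3 * n ^ 2 + n) := by
  induction n generalizing x with
  | zero => norm_num [factorial]; ring
  | succ n ih =>
    simp_rw [pow_succ' _ (n + 2)]
    rw [fwdDiff_iter_succ_mul_id, ih, fwdDiff_iter_pow_succ]
    push_cast [factorial_succ]
    ring

theorem stmt1 (d : ℕ) (hd : 2 ≤ d) (x : ℝ) :
    bdiff^[d - 2] (fun y : ℝ => y ^ d) x =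
      (Nat.factorial d : ℝ) / 24 *
        (12 * x ^ 2 - 12 * ((d : ℝ) - 2) * x + 3 * (d : ℝ) ^ 2 - 11 * (d : ℝ) + 10) := by
  obtain ⟨n, rfl⟩ : ∃ n, d = n + 2 := ⟨d - 2, by omega⟩
  rw [Nat.add_sub_cancel, iterate_bdiff_eq_fwdDiff_iter, fwdDiff_iter_pow_add_two]
  push_cast
  ring
end

section
/- Define A_d(x) = (D^{d-1} f_d)(x) and B_d(x) = (D^{d-2} f_d)(x), where f_d(x) = x^d. Then for every integer d ≥ 3 and every real x, B_d(x) = d·B_{d-1}(x) - (d(d-1)/2)·A_{d-2}(x) + d!/6. -/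
/-- `A_d(x) = (D^{d-1} x^d)(x)`. -/
noncomputable def A (d : ℕ) : ℝ → ℝ := bdiff^[d - 1] (fun y : ℝ => y ^ d)

/-- `B_d(x) = (D^{d-2} x^d)(x)`. -/
noncomputable def B (d : ℕ) : ℝ → ℝ := bdiff^[d - 2] (fun y : ℝ => y ^ d)

lemma bdiff_mulX (k : ℕ) (f : ℝ → ℝ) (x : ℝ) :
    bdiff^[k + 1] (fun y => y * f y) x
      = x * bdiff^[k + 1] f x + (k + 1 : ℝ) * bdiff^[k] f (x - 1) := by
  induction k generalizing x with
  | zero => simp [bdiff]; ring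
  | succ k ih =>
    have hF : ∀ (j : ℕ) (y : ℝ),
        bdiff^[j + 1] f y = bdiff^[j] f y - bdiff^[j] f (y - 1) := by
      intro j y; rw [Function.iterate_succ_apply' bdiff j f]; rfl
    rw [Function.iterate_succ_apply' bdiff (k + 1)]
    simp only [bdiff]
    rw [ih x, ih (x - 1)]
    rw [hF (k + 1) x, hF k x, hF k (x - 1)]
    push_cast
    ring

lemma A_closed (n : ℕ) (x : ℝ) :
    bdiff^[n] (fun y : ℝ => y ^ (n + 1)) x
      = (Nat.factorial (n + 1) : ℝ) * (x - n / 2) := by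
  induction n generalizing x with
  | zero => simp
  | succ n ih =>
    have e : (fun y : ℝ => y ^ (n + 2)) = (fun y : ℝ => y * y ^ (n + 1)) := by
      funext y; ring
    rw [e, bdiff_mulX n (fun y : ℝ => y ^ (n + 1)) x]
    rw [Function.iterate_succ_apply' bdiff n]
    simp only [bdiff]
    rw [ih x, ih (x - 1)]
    rw [Nat.factorial_succ (n + 1)]
    push_cast
    ring

lemma B_closed (n : ℕ) (x : ℝ) :
    bdiff^[n] (fun y : ℝ => y ^ (n + 2)) x
      = (Nat.factorial (n + 2) : ℝ) / 2
        * (x ^ 2 - n * x + n * (3 * n + 1) / 12) := by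
  induction n generalizing x with
  | zero => norm_num [Nat.factorial]
  | succ n ih =>
    have e : (fun y : ℝ => y ^ (n + 3)) = (fun y : ℝ => y * y ^ (n + 2)) := by
      funext y; ring
    rw [e, bdiff_mulX n (fun y : ℝ => y ^ (n + 2)) x]
    rw [Function.iterate_succ_apply' bdiff n]
    simp only [bdiff]
    rw [ih x, ih (x - 1)]
    rw [Nat.factorial_succ (n + 2)]
    push_cast
    ring

theorem stmt3 (d : ℕ) (hd : 3 ≤ d) (x : ℝ) :
    B d x = (d : ℝ) * B (d - 1) x - (d : ℝ) * ((d : ℝ) - 1) / 2 * A (d - 2) x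
      + (Nat.factorial d : ℝ) / 6 := by
  obtain ⟨m, rfl⟩ : ∃ m, d = m + 3 := ⟨d - 3, by omega⟩
  simp only [A, B]
  rw [show m + 3 - 2 = m + 1 from by omega, show m + 3 - 1 = m + 2 from by omega,
    show m + 2 - 2 = m from by omega, show m + 1 - 1 = m from by omega]
  have e1 : (fun y : ℝ => y ^ (m + 3)) = (fun y : ℝ => y ^ (m + 1 + 2)) := by
    funext y; congr 1
  rw [e1, B_closed (m + 1) x, B_closed m x, A_closed m x]
  rw [Nat.factorial_succ (m + 2), Nat.factorial_succ (m + 1)]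
  push_cast
  ring
end

section
/- The coefficient of x^{d-1} in the polynomial χ̃(x) equals -(1/2)·μ^{d-1}·d·p. -/
open Polynomial Finset

/-- `d = r(r-1)a/2 + rb + r`. -/
def dInv (r a b : ℕ) : ℕ := r * (r - 1) * a / 2 + r * b + r

/-- `p = (r-1)a + b + 2`. -/
def pInv (r a b : ℕ) : ℕ := (r - 1) * a + b + 2

/-- The polynomial `χ̃(x) = ∏_{j=1}^r (μx - p + 1 + (j-1)a/2)_{1+b+(r-j)a}`,
as a polynomial in `x`. -/
noncomputable def chiP (r a b : ℕ) (μ : ℝ) : Polynomial ℝ :=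
  ∏ j ∈ Finset.Icc 1 r,
    (ascPochhammer ℝ (1 + b + (r - j) * a)).comp
      (Polynomial.C μ * Polynomial.X +
        Polynomial.C (-(pInv r a b : ℝ) + 1 + ((j : ℝ) - 1) * (a : ℝ) / 2))

lemma coeff_comp_C_mul_X (p : Polynomial ℝ) (μ : ℝ) (n : ℕ) :
    (p.comp (C μ * X)).coeff n = μ ^ n * p.coeff n := by
  induction p using Polynomial.induction_on' with
  | add p q hp hq => simp [add_comp, hp, hq, mul_add]
  | monomial k a =>
      rw [monomial_comp]
      simp only [mul_pow, ← C_pow, ← mul_assoc, ← C_mul]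
      rw [mul_comm a (μ^k), C_mul_X_pow_eq_monomial, coeff_monomial, coeff_monomial]
      split <;> simp_all [mul_comm]

lemma nextCoeff_asc_comp (n : ℕ) (c : ℝ) :
    ((ascPochhammer ℝ n).comp (X + C c)).nextCoeff = n * c + n * (n - 1) / 2 := by
  induction n with
  | zero => simp [ascPochhammer_zero, nextCoeff]
  | succ n ih =>
      rw [ascPochhammer_succ_right, mul_comp]
      have h1 : ((X + (n : Polynomial ℝ)) : Polynomial ℝ) = X + C (n : ℝ) := by
        rw [Polynomial.C_eq_natCast]
      rw [h1, add_comp, X_comp, C_comp]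
      have h2 : (X + C c + C (n:ℝ)) = X + C (c + n) := by rw [C_add]; ring
      rw [h2, Monic.nextCoeff_mul ((monic_ascPochhammer ℝ n).comp_X_add_C c) (monic_X_add_C _),
        ih, nextCoeff_X_add_C]
      push_cast
      ring

theorem stmt7 (r a b : ℕ) (hr : 1 ≤ r) (μ : ℝ) (hμ : 0 < μ) :
    (chiP r a b μ).coeff (dInv r a b - 1) =
      -(1 / 2) * μ ^ (dInv r a b - 1) * (dInv r a b : ℝ) * (pInv r a b : ℝ) := by
  set nn : ℕ → ℕ := fun j => 1 + b + (r - j) * a with hnn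
  set cc : ℕ → ℝ := fun j => -(pInv r a b : ℝ) + 1 + ((j : ℝ) - 1) * (a : ℝ) / 2 with hcc
  set g : ℕ → Polynomial ℝ := fun j => (ascPochhammer ℝ (nn j)).comp (X + C (cc j)) with hg
  set Q : Polynomial ℝ := ∏ j ∈ Finset.Icc 1 r, g j with hQ
  -- Step A : chiP = Q.comp (C μ * X)
  have hchi : chiP r a b μ = Q.comp (C μ * X) := by
    rw [hQ, chiP, Polynomial.prod_comp]
    refine Finset.prod_congr rfl fun j _ => ?_
    rw [hg]
    have : (X + C (cc j)).comp (C μ * X) = C μ * X + C (cc j) := by simp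
    rw [← this, ← comp_assoc]
  -- degrees
  have hmono : ∀ j ∈ Finset.Icc 1 r, (g j).Monic := fun j _ =>
    (monic_ascPochhammer ℝ (nn j)).comp_X_add_C _
  have hQmonic : Q.Monic := monic_prod_of_monic _ _ hmono
  have hdeg : Q.natDegree = dInv r a b := by
    rw [hQ, natDegree_prod _ _ (fun j hj => (hmono j hj).ne_zero)]
    have hdj : ∀ j, (g j).natDegree = nn j := by
      intro j
      rw [hg, natDegree_comp, ascPochhammer_natDegree, natDegree_X_add_C, mul_one]
    simp only [hdj]
    rw [← Finset.Ico_add_one_right_eq_Icc, Finset.sum_Ico_eq_sum_range]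
    have hr1 : r + 1 - 1 = r := by omega
    rw [hr1]
    have hre : ∀ i, i < r → nn (1 + i) = 1 + b + (r - 1 - i) * a := by
      intro i hi; simp only [hnn]; congr 2; omega
    rw [Finset.sum_congr rfl fun i hi => hre i (Finset.mem_range.mp hi)]
    rw [show (fun i => 1 + b + (r - 1 - i) * a) = fun i => (fun k => 1 + b + k * a) (r - 1 - i) from rfl]
    rw [Finset.sum_range_reflect (fun k => 1 + b + k * a) r]
    rw [Finset.sum_add_distrib, Finset.sum_const, ← Finset.sum_mul, Finset.card_range]
    have hg2 : (∑ i ∈ Finset.range r, i) * 2 = r * (r - 1) := Finset.sum_range_id_mul_two r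
    rw [dInv]
    set t := ∑ i ∈ Finset.range r, i
    have : r * (r - 1) * a / 2 = t * a := by
      rw [← hg2, mul_comm t 2, mul_assoc, Nat.mul_div_cancel_left _ two_pos]
    rw [this]
    simp only [smul_eq_mul]
    ring
  have hd1 : 1 ≤ dInv r a b := by rw [dInv]; omega
  -- next coefficient
  have hnext : Q.nextCoeff = (dInv r a b : ℝ) * (-(pInv r a b : ℝ) / 2) := by
    rw [hQ, Monic.nextCoeff_prod _ _ hmono]
    have hterm : ∀ j ∈ Finset.Icc 1 r,
        (g j).nextCoeff = (nn j : ℝ) * (-(pInv r a b : ℝ) / 2) := by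
      intro j hj
      obtain ⟨hj1, hj2⟩ := Finset.mem_Icc.mp hj
      rw [hg, nextCoeff_asc_comp]
      have h1 : ((nn j : ℕ) : ℝ) = 1 + b + ((r : ℝ) - j) * a := by
        simp only [hnn]; push_cast [Nat.cast_sub hj2]; ring
      have h2 : ((pInv r a b : ℕ) : ℝ) = ((r : ℝ) - 1) * a + b + 2 := by
        simp only [pInv]; push_cast [Nat.cast_sub hr]; ring
      simp only [hcc]
      rw [h1, h2]
      ring
    rw [Finset.sum_congr rfl hterm, ← Finset.sum_mul]
    congr 1
    rw [← Nat.cast_sum, ← hdeg, hQ, natDegree_prod _ _ (fun j hj => (hmono j hj).ne_zero)]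
    congr 1
    refine Finset.sum_congr rfl fun j _ => ?_
    rw [hg, natDegree_comp, ascPochhammer_natDegree, natDegree_X_add_C, mul_one]
  have hcoeff : Q.coeff (dInv r a b - 1) = Q.nextCoeff := by
    rw [nextCoeff, if_neg (by omega : Q.natDegree ≠ 0), hdeg]
  rw [hchi, coeff_comp_C_mul_X, hcoeff, hnext]
  ring
end

section
/- Assume d ≥ 2. The coefficient of x^{d-2} in the polynomial χ̃(x) equals (1/2)·μ^{d-2}·c̃₂, where c̃₂ = d²p²/4 - r(p-1)p(2p-1)/6 + r(r-1)a(3p²-3p+1)/12 - (r-1)r(2r-1)a²(p-1)/24 + r²(r-1)²a³/48. -/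
/-- `c̃₂` as a real number. -/
noncomputable def ctildeR (r a b : ℕ) : ℝ :=
  (dInv r a b : ℝ) ^ 2 * (pInv r a b : ℝ) ^ 2 / 4
    - (r : ℝ) * ((pInv r a b : ℝ) - 1) * (pInv r a b : ℝ) * (2 * (pInv r a b : ℝ) - 1) / 6
    + (r : ℝ) * ((r : ℝ) - 1) * (a : ℝ) *
        (3 * (pInv r a b : ℝ) ^ 2 - 3 * (pInv r a b : ℝ) + 1) / 12
    - ((r : ℝ) - 1) * (r : ℝ) * (2 * (r : ℝ) - 1) * (a : ℝ) ^ 2 * ((pInv r a b : ℝ) - 1) / 24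
    + (r : ℝ) ^ 2 * ((r : ℝ) - 1) ^ 2 * (a : ℝ) ^ 3 / 48

section AuxStmt8
open Polynomial Finset

lemma sum_lin (t : ℝ) (m : ℕ) :
    ∑ i ∈ Finset.range m, (t + (i : ℝ)) = m * t + (m : ℝ) * ((m : ℝ) - 1) / 2 := by
  induction m with
  | zero => simp
  | succ n ih => rw [Finset.sum_range_succ, ih]; push_cast; ring

lemma sum_sq (t : ℝ) (m : ℕ) :
    ∑ i ∈ Finset.range m, (t + (i : ℝ)) ^ 2
      = m * t ^ 2 + (m : ℝ) * ((m : ℝ) - 1) * t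
        + (m : ℝ) * ((m : ℝ) - 1) * (2 * (m : ℝ) - 1) / 6 := by
  induction m with
  | zero => simp
  | succ n ih => rw [Finset.sum_range_succ, ih]; push_cast; ring

lemma sum_cubic (c0 c1 c2 c3 : ℝ) (r : ℕ) :
    ∑ j ∈ Finset.Icc 1 r, (c0 + c1 * (j : ℝ) + c2 * (j : ℝ) ^ 2 + c3 * (j : ℝ) ^ 3)
      = c0 * r + c1 * ((r : ℝ) * ((r : ℝ) + 1) / 2)
        + c2 * ((r : ℝ) * ((r : ℝ) + 1) * (2 * (r : ℝ) + 1) / 6)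
        + c3 * ((r : ℝ) * ((r : ℝ) + 1) / 2) ^ 2 := by
  induction r with
  | zero => simp
  | succ n ih =>
      rw [Finset.sum_Icc_succ_top (by omega), ih]; push_cast; ring

lemma asc_prod (m : ℕ) :
    ascPochhammer ℝ m = ∏ i ∈ Finset.range m, (X + C (i : ℝ)) := by
  induction m with
  | zero => simp
  | succ n ih =>
      rw [ascPochhammer_succ_right, ih, Finset.prod_range_succ, Polynomial.C_eq_natCast]

lemma natDegree_linear_prod {ι : Type*} (μ : ℝ) (s : Finset ι) (c : ι → ℝ) :
    (∏ i ∈ s, (C μ * X + C (c i))).natDegree ≤ s.card := by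
  refine le_trans (Polynomial.natDegree_prod_le s _) ?_
  have h1 : ∀ i ∈ s, (C μ * X + C (c i)).natDegree ≤ 1 := fun i _ =>
    Polynomial.natDegree_linear_le (a := μ) (b := c i)
  refine le_trans (Finset.sum_le_sum (g := fun _ => 1) h1) ?_
  simp

lemma coeff_lin_mul (μ t : ℝ) (P : ℝ[X]) (k : ℕ) :
    ((C μ * X + C t) * P).coeff (k + 1) = μ * P.coeff k + t * P.coeff (k + 1) := by
  rw [add_mul, coeff_add, mul_assoc, coeff_C_mul, coeff_C_mul, coeff_X_mul]

lemma coeff_lin_mul_zero (μ t : ℝ) (P : ℝ[X]) :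
    ((C μ * X + C t) * P).coeff 0 = t * P.coeff 0 := by
  rw [add_mul, coeff_add, mul_assoc, coeff_C_mul, coeff_C_mul, mul_coeff_zero, coeff_X_zero,
    zero_mul, mul_zero, zero_add]

lemma coeff_linear_prod {ι : Type*} [DecidableEq ι] (μ : ℝ) (s : Finset ι) (c : ι → ℝ) :
    ((∏ i ∈ s, (C μ * X + C (c i))).coeff s.card = μ ^ s.card)
    ∧ (∀ m, s.card = m + 1 →
        (∏ i ∈ s, (C μ * X + C (c i))).coeff m = μ ^ m * ∑ i ∈ s, c i)
    ∧ (∀ m, s.card = m + 2 →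
        (∏ i ∈ s, (C μ * X + C (c i))).coeff m
          = μ ^ m * (((∑ i ∈ s, c i) ^ 2 - ∑ i ∈ s, (c i) ^ 2) / 2)) := by
  induction s using Finset.induction_on with
  | empty => refine ⟨by simp, fun m hm => by simp at hm, fun m hm => by simp at hm⟩
  | @insert a t ha ih =>
      obtain ⟨ih1, ih2, ih3⟩ := ih
      rw [Finset.prod_insert ha]
      rw [Finset.card_insert_of_notMem ha]
      have hhigh : (∏ i ∈ t, (C μ * X + C (c i))).coeff (t.card + 1) = 0 :=
        coeff_eq_zero_of_natDegree_lt (lt_of_le_of_lt (natDegree_linear_prod μ t c) (by omega))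
      refine ⟨?_, ?_, ?_⟩
      · rw [coeff_lin_mul, ih1, hhigh, mul_zero, add_zero, pow_succ]; ring
      · intro m hm
        have hm' : m = t.card := by omega
        subst hm'
        rcases Nat.eq_zero_or_pos t.card with h0 | hpos
        · have ht : t = ∅ := Finset.card_eq_zero.mp h0
          subst ht
          simp [coeff_lin_mul_zero]
        · obtain ⟨n, hcard⟩ : ∃ n, t.card = n + 1 := ⟨t.card - 1, by omega⟩
          rw [hcard] at ih1 ⊢
          rw [coeff_lin_mul, ih1, ih2 n hcard, Finset.sum_insert ha, pow_succ]
          ring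
      · intro m hm
        have hm' : t.card = m + 1 := by omega
        rcases Nat.eq_zero_or_pos m with h0 | hpos
        · subst h0
          have h1 : t.card = 1 := by omega
          obtain ⟨x, rfl⟩ := Finset.card_eq_one.mp h1
          rw [coeff_lin_mul_zero, ih2 0 h1]
          simp [Finset.sum_insert ha]
          ring
        · obtain ⟨k, rfl⟩ : ∃ k, m = k + 1 := ⟨m - 1, by omega⟩
          have h2 : t.card = k + 2 := by omega
          rw [coeff_lin_mul, ih3 k h2, ih2 (k + 1) h2, Finset.sum_insert ha,
            Finset.sum_insert ha, pow_succ]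
          ring

lemma sum_m_eq (r a b : ℕ) {k : ℕ} (hk : r * (r - 1) = 2 * k) :
    ∑ j ∈ Finset.Icc 1 r, (1 + b + (r - j) * a) = dInv r a b := by
  have hdk : dInv r a b = k * a + r * b + r := by
    unfold dInv
    rw [hk, mul_assoc, Nat.mul_div_cancel_left _ (by norm_num : 0 < 2)]
  have h0 : Finset.Icc 1 r = Finset.Ico 1 (r + 1) := by
    rw [Finset.Ico_add_one_right_eq_Icc]
  rw [h0, Finset.sum_Ico_eq_sum_range]
  simp only [Nat.add_sub_cancel]
  rw [← Finset.sum_range_reflect]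
  have hc : ∀ i ∈ Finset.range r, 1 + b + (r - (1 + (r - 1 - i))) * a = 1 + b + i * a := by
    intro i hi
    rw [Finset.mem_range] at hi
    congr 2
    omega
  rw [Finset.sum_congr rfl hc]
  have hid : ∑ i ∈ Finset.range r, i = k := by
    have := Finset.sum_range_id_mul_two r
    omega
  rw [Finset.sum_add_distrib, ← Finset.sum_mul, hid, Finset.sum_const, Finset.card_range,
    smul_eq_mul, hdk]
  ring

end AuxStmt8

open Polynomial Finset in
theorem stmt8 (r a b : ℕ) (hr : 1 ≤ r) (μ : ℝ) (hμ : 0 < μ) (hd : 2 ≤ dInv r a b) :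
    (chiP r a b μ).coeff (dInv r a b - 2) =
      1 / 2 * μ ^ (dInv r a b - 2) * ctildeR r a b := by
  -- evenness of r*(r-1)
  obtain ⟨k, hk⟩ : ∃ k, r * (r - 1) = 2 * k := by
    rcases Nat.even_or_odd r with h | h
    · obtain ⟨m, hm⟩ := h
      exact ⟨m * (r - 1), by rw [hm]; ring⟩
    · have h1 : Even (r - 1) := Nat.Odd.sub_odd h odd_one
      obtain ⟨m, hm⟩ := h1
      exact ⟨r * m, by rw [hm]; ring⟩
  -- cast facts
  have hr1 : ((r - 1 : ℕ) : ℝ) = (r : ℝ) - 1 := by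
    push_cast [Nat.cast_sub hr]; ring
  have hpcast : (pInv r a b : ℝ) = ((r : ℝ) - 1) * a + b + 2 := by
    unfold pInv; push_cast [Nat.cast_sub hr]; ring
  have hkcast : (k : ℝ) = (r : ℝ) * ((r : ℝ) - 1) / 2 := by
    have := congrArg (fun n : ℕ => (n : ℝ)) hk
    push_cast [Nat.cast_sub hr] at this
    linarith
  have hdk : dInv r a b = k * a + r * b + r := by
    unfold dInv
    rw [hk, mul_assoc, Nat.mul_div_cancel_left _ (by norm_num : 0 < 2)]
  have hdcast : (dInv r a b : ℝ) = (r : ℝ) * ((r : ℝ) - 1) * a / 2 + r * b + r := by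
    rw [hdk]; push_cast; rw [hkcast]; ring
  -- the index set and linear coefficients
  set σs : Finset ((_ : ℕ) × ℕ) :=
    (Finset.Icc 1 r).sigma (fun j => Finset.range (1 + b + (r - j) * a)) with hσs
  set cf : ((_ : ℕ) × ℕ) → ℝ :=
    fun x => (-(pInv r a b : ℝ) + 1 + ((x.1 : ℝ) - 1) * a / 2) + (x.2 : ℝ) with hcf
  have hchi : chiP r a b μ = ∏ x ∈ σs, (Polynomial.C μ * Polynomial.X + Polynomial.C (cf x)) := by
    rw [hσs, Finset.prod_sigma]
    unfold chiP
    refine Finset.prod_congr rfl fun j hj => ?_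
    rw [asc_prod, Polynomial.prod_comp]
    refine Finset.prod_congr rfl fun i _ => ?_
    rw [Polynomial.add_comp, Polynomial.X_comp, Polynomial.C_comp, add_assoc, ← Polynomial.C_add]
  have hcardσ : σs.card = dInv r a b := by
    rw [hσs, Finset.card_sigma]
    simp only [Finset.card_range]
    exact sum_m_eq r a b hk
  obtain ⟨-, -, h3⟩ := coeff_linear_prod μ σs cf
  rw [hchi, h3 (dInv r a b - 2) (by rw [hcardσ]; omega)]
  -- compute S and Q
  have hS : ∑ x ∈ σs, cf x =
      (-1 - 3/2*(b:ℝ) - 1/2*(b:ℝ)^2 + 1/2*(a:ℝ) + 1/2*(a:ℝ)*(b:ℝ) - 3/2*(r:ℝ)*(a:ℝ)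
        - (r:ℝ)*(a:ℝ)*(b:ℝ) + 1/2*(r:ℝ)*(a:ℝ)^2 - 1/2*(r:ℝ)^2*(a:ℝ)^2) * r
      + ((a:ℝ) + 1/2*(a:ℝ)*(b:ℝ) - 1/2*(a:ℝ)^2 + 1/2*(r:ℝ)*(a:ℝ)^2)
          * ((r:ℝ) * ((r:ℝ) + 1) / 2)
      + 0 * ((r:ℝ) * ((r:ℝ) + 1) * (2*(r:ℝ) + 1) / 6)
      + 0 * ((r:ℝ) * ((r:ℝ) + 1) / 2) ^ 2 := by
    rw [hσs, Finset.sum_sigma]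
    rw [← sum_cubic]
    refine Finset.sum_congr rfl fun j hj => ?_
    rw [Finset.mem_Icc] at hj
    rw [hcf]
    simp only []
    rw [sum_lin]
    push_cast [Nat.cast_sub hj.2, Nat.cast_sub hr, hpcast]
    ring
  have hQ : ∑ x ∈ σs, (cf x) ^ 2 =
      (1 + 13/6*(b:ℝ) + 3/2*(b:ℝ)^2 + 1/3*(b:ℝ)^3 - (a:ℝ) - 3/2*(a:ℝ)*(b:ℝ)
        - 1/2*(a:ℝ)*(b:ℝ)^2 + 1/4*(a:ℝ)^2 + 1/4*(a:ℝ)^2*(b:ℝ) + 13/6*(r:ℝ)*(a:ℝ)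
        + 3*(r:ℝ)*(a:ℝ)*(b:ℝ) + (r:ℝ)*(a:ℝ)*(b:ℝ)^2 - 3/2*(r:ℝ)*(a:ℝ)^2
        - (r:ℝ)*(a:ℝ)^2*(b:ℝ) + 1/4*(r:ℝ)*(a:ℝ)^3 + 3/2*(r:ℝ)^2*(a:ℝ)^2
        + (r:ℝ)^2*(a:ℝ)^2*(b:ℝ) - 1/2*(r:ℝ)^2*(a:ℝ)^3 + 1/3*(r:ℝ)^3*(a:ℝ)^3) * r
      + (-7/6*(a:ℝ) - 3/2*(a:ℝ)*(b:ℝ) - 1/2*(a:ℝ)*(b:ℝ)^2 + (a:ℝ)^2 + 1/2*(a:ℝ)^2*(b:ℝ)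
        - 1/4*(a:ℝ)^3 - 3/2*(r:ℝ)*(a:ℝ)^2 - (r:ℝ)*(a:ℝ)^2*(b:ℝ) + 1/2*(r:ℝ)*(a:ℝ)^3
        - 1/2*(r:ℝ)^2*(a:ℝ)^3) * ((r:ℝ) * ((r:ℝ) + 1) / 2)
      + (1/4*(a:ℝ)^2 + 1/4*(a:ℝ)^2*(b:ℝ) + 1/4*(r:ℝ)*(a:ℝ)^3)
          * ((r:ℝ) * ((r:ℝ) + 1) * (2*(r:ℝ) + 1) / 6)
      + (-1/12*(a:ℝ)^3) * ((r:ℝ) * ((r:ℝ) + 1) / 2) ^ 2 := by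
    rw [hσs, Finset.sum_sigma]
    rw [← sum_cubic]
    refine Finset.sum_congr rfl fun j hj => ?_
    rw [Finset.mem_Icc] at hj
    rw [hcf]
    simp only []
    rw [sum_sq]
    push_cast [Nat.cast_sub hj.2, Nat.cast_sub hr, hpcast]
    ring
  rw [hS, hQ]
  unfold ctildeR
  rw [hdcast, hpcast]
  ring
end

section
/- Let d = 1 (i.e. r = 1, a = b = 0, so p = 2 and χ̃(x) = μx - 1) and fix an integer d₀ ≥ 1. For each fixed real s, the coefficient of α^{d₀-1} in the polynomial α ↦ ε(α, s) equals -((μ-1)/μ)·((1+d₀)(2+d₀)/2 - 1)·s + (1/24)·d₀(d₀+1)(d₀+2)(3d₀+5). -/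
/-- The explicit Rawnsley ε-function in the one-dimensional case `d = 1`,
with `χ̃(x) = μx - 1`:
`ε(α,s) = μ⁻¹ ∑_{k=0}^1 ((D^k χ̃)(1)/k!) s^{1-k} (α-1-d₀)_{k+d₀}`. -/
noncomputable def eps1 (d₀ : ℕ) (μ : ℝ) (α s : ℝ) : ℝ :=
  (1 / μ) *
    ∑ k ∈ Finset.range 2,
      (bdiff^[k] (fun x : ℝ => μ * x - 1) 1 / (Nat.factorial k : ℝ)) * s ^ (1 - k) *
        (ascPochhammer ℝ (k + d₀)).eval (α - 1 - (d₀ : ℝ))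

open Polynomial Finset

lemma asc_eval (n : ℕ) (y : ℝ) :
    (ascPochhammer ℝ n).eval y = ∏ j ∈ Finset.range n, (y + j) := by
  induction n with
  | zero => simp
  | succ n ih => rw [ascPochhammer_succ_eval, ih, Finset.prod_range_succ]

lemma coeff_top (a : ℕ → ℝ) (n : ℕ) :
    (∏ j ∈ Finset.range n, (X - C (a j))).coeff n = 1 := by
  have hm : (∏ j ∈ Finset.range n, (X - C (a j))).Monic :=
    monic_prod_of_monic _ _ fun j _ => monic_X_sub_C (a j)
  have hd : (∏ j ∈ Finset.range n, (X - C (a j))).natDegree = n := by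
    rw [Polynomial.natDegree_prod]
    · simp
    · intro i _; exact X_sub_C_ne_zero (a i)
  have h2 := hm.coeff_natDegree
  rwa [hd] at h2

lemma coeff_sub1 (a : ℕ → ℝ) (n : ℕ) :
    (∏ j ∈ Finset.range (n + 1), (X - C (a j))).coeff n
      = -(∑ j ∈ Finset.range (n + 1), a j) := by
  induction n with
  | zero => simp
  | succ n ih =>
    rw [Finset.prod_range_succ, mul_sub, Polynomial.coeff_sub,
      Polynomial.coeff_mul_X, Polynomial.coeff_mul_C, ih, coeff_top]
    rw [Finset.sum_range_succ a (n + 1)]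
    ring

lemma coeff_sub2 (a : ℕ → ℝ) (n : ℕ) :
    (∏ j ∈ Finset.range (n + 2), (X - C (a j))).coeff n
      = ∑ j ∈ Finset.range (n + 2), a j * ∑ i ∈ Finset.range j, a i := by
  induction n with
  | zero =>
    rw [show (∏ j ∈ Finset.range 2, (X - C (a j))) = (X - C (a 0)) * (X - C (a 1)) by
      rw [Finset.prod_range_succ, Finset.prod_range_one]]
    simp [Polynomial.coeff_mul, Finset.Nat.antidiagonal_zero, Finset.sum_range_succ]
    ring
  | succ n ih =>
    rw [Finset.prod_range_succ, mul_sub, Polynomial.coeff_sub,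
      Polynomial.coeff_mul_X, Polynomial.coeff_mul_C, ih, coeff_sub1]
    rw [Finset.sum_range_succ _ (n + 2)]
    ring

lemma sum1 (n : ℕ) : ∑ j ∈ Finset.range n, ((j : ℝ) + 2) = n * (n + 3) / 2 := by
  induction n with
  | zero => simp
  | succ n ih => rw [Finset.sum_range_succ, ih]; push_cast; ring

lemma sum2 (n : ℕ) : ∑ i ∈ Finset.range n, ((i : ℝ) + 1) = n * (n + 1) / 2 := by
  induction n with
  | zero => simp
  | succ n ih => rw [Finset.sum_range_succ, ih]; push_cast; ring

lemma sum3 (n : ℕ) :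
    ∑ j ∈ Finset.range n, ((j : ℝ) + 1) * (∑ i ∈ Finset.range j, ((i : ℝ) + 1))
      = ((n : ℝ) - 1) * n * (n + 1) * (3 * n + 2) / 24 := by
  induction n with
  | zero => simp
  | succ n ih => rw [Finset.sum_range_succ, ih, sum2]; push_cast; ring

lemma refl1 (m : ℕ) (α : ℝ) :
    ∏ j ∈ Finset.range (m + 1), (α - 1 - ((m : ℝ) + 1) + (j : ℝ))
      = ∏ j ∈ Finset.range (m + 1), (α - ((j : ℝ) + 2)) := by
  rw [← Finset.prod_range_reflect (fun j => α - ((j : ℝ) + 2)) (m + 1)]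
  refine Finset.prod_congr rfl fun j hj => ?_
  simp only [Finset.mem_range] at hj
  have h : m + 1 - 1 - j = m - j := by omega
  rw [h, Nat.cast_sub (by omega)]
  ring

lemma refl2 (m : ℕ) (α : ℝ) :
    ∏ j ∈ Finset.range (m + 2), (α - 1 - ((m : ℝ) + 1) + (j : ℝ))
      = ∏ j ∈ Finset.range (m + 2), (α - ((j : ℝ) + 1)) := by
  rw [← Finset.prod_range_reflect (fun j => α - ((j : ℝ) + 1)) (m + 2)]
  refine Finset.prod_congr rfl fun j hj => ?_
  simp only [Finset.mem_range] at hj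
  have h : m + 2 - 1 - j = m + 1 - j := by omega
  rw [h, Nat.cast_sub (by omega)]
  push_cast
  ring

theorem stmt13 (d₀ : ℕ) (hd₀ : 1 ≤ d₀) (μ : ℝ) (hμ : 0 < μ) (s : ℝ) :
    ∃ Q : Polynomial ℝ, (∀ α : ℝ, Q.eval α = eps1 d₀ μ α s) ∧
      Q.coeff (d₀ - 1) =
        -((μ - 1) / μ) * ((1 + (d₀ : ℝ)) * (2 + (d₀ : ℝ)) / 2 - 1) * s +
          1 / 24 * (d₀ : ℝ) * ((d₀ : ℝ) + 1) * ((d₀ : ℝ) + 2) * (3 * (d₀ : ℝ) + 5) := by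
  obtain ⟨m, rfl⟩ : ∃ m, d₀ = m + 1 := ⟨d₀ - 1, by omega⟩
  refine ⟨Polynomial.C ((μ - 1) / μ * s) *
      ∏ j ∈ Finset.range (m + 1), (X - Polynomial.C ((j : ℝ) + 2))
    + ∏ j ∈ Finset.range (m + 2), (X - Polynomial.C ((j : ℝ) + 1)), ?_, ?_⟩
  · intro α
    rw [eps1, Finset.sum_range_succ, Finset.sum_range_one]
    simp only [Function.iterate_zero, id_eq, Function.iterate_one, bdiff,
      Nat.factorial, Polynomial.eval_add, Polynomial.eval_mul, Polynomial.eval_C,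
      Polynomial.eval_prod, Polynomial.eval_sub, Polynomial.eval_X,
      zero_add, pow_zero, pow_one]
    rw [asc_eval, asc_eval]
    push_cast
    rw [show 1 + (m + 1) = m + 2 by omega, refl1, refl2]
    field_simp
    ring
  · simp only [Polynomial.coeff_add, Polynomial.coeff_C_mul, Nat.add_sub_cancel]
    rw [coeff_sub1 (fun j => (j : ℝ) + 2) m, coeff_sub2 (fun j => (j : ℝ) + 1) m,
      sum1 (m + 1), sum3 (m + 2)]
    push_cast
    ring
end

section
/- Let n ≥ 2 be an integer and take r = n, a = 4, b = 0, so that d = n(2n-1) and p = 2(2n-1) (the invariants of the bounded symmetric domain Ω_{II}(2n) of type II with even parameter). Then E = 4n²(8n⁴ - 20n³ + 10n² + 5n - 3), and E ≠ 0 for every integer n ≥ 2. -/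
/-- `c̃₂` as a rational number. -/
def ctildeQ (r a b : ℕ) : ℚ :=
  (dInv r a b : ℚ) ^ 2 * (pInv r a b : ℚ) ^ 2 / 4
    - (r : ℚ) * ((pInv r a b : ℚ) - 1) * (pInv r a b : ℚ) * (2 * (pInv r a b : ℚ) - 1) / 6
    + (r : ℚ) * ((r : ℚ) - 1) * (a : ℚ) *
        (3 * (pInv r a b : ℚ) ^ 2 - 3 * (pInv r a b : ℚ) + 1) / 12
    - ((r : ℚ) - 1) * (r : ℚ) * (2 * (r : ℚ) - 1) * (a : ℚ) ^ 2 * ((pInv r a b : ℚ) - 1) / 24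
    + (r : ℚ) ^ 2 * ((r : ℚ) - 1) ^ 2 * (a : ℚ) ^ 3 / 48

/-- `E = 12(d+1)c̃₂ - (d-1)d(3d+2)p²`. -/
def EQ (r a b : ℕ) : ℚ :=
  12 * ((dInv r a b : ℚ) + 1) * ctildeQ r a b
    - ((dInv r a b : ℚ) - 1) * (dInv r a b : ℚ) * (3 * (dInv r a b : ℚ) + 2)
        * (pInv r a b : ℚ) ^ 2

theorem stmt16 (n : ℕ) (hn : 2 ≤ n) :
    dInv n 4 0 = n * (2 * n - 1) ∧ pInv n 4 0 = 2 * (2 * n - 1) ∧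
    EQ n 4 0 = 4 * (n : ℚ) ^ 2 *
        (8 * (n : ℚ) ^ 4 - 20 * (n : ℚ) ^ 3 + 10 * (n : ℚ) ^ 2 + 5 * (n : ℚ) - 3) ∧
    EQ n 4 0 ≠ 0 := by
  obtain ⟨m, hm⟩ : ∃ m, n = m + 2 := ⟨n - 2, by omega⟩
  subst hm
  have hd : dInv (m + 2) 4 0 = (m + 2) * (2 * (m + 2) - 1) := by
    unfold dInv
    rw [show (m + 2) - 1 = m + 1 from rfl, show 2 * (m + 2) - 1 = 2 * m + 3 from rfl]
    rw [show (m + 2) * (m + 1) * 4 = 2 * (2 * m ^ 2 + 6 * m + 4) from by ring,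
      Nat.mul_div_cancel_left _ (by norm_num)]
    ring
  have hp : pInv (m + 2) 4 0 = 2 * (2 * (m + 2) - 1) := by
    unfold pInv
    rw [show (m + 2) - 1 = m + 1 from rfl, show 2 * (m + 2) - 1 = 2 * m + 3 from rfl]
    ring
  have hdQ : ((dInv (m + 2) 4 0 : ℕ) : ℚ) = ((m + 2 : ℕ) : ℚ) * (2 * ((m + 2 : ℕ) : ℚ) - 1) := by
    rw [hd, show 2 * (m + 2) - 1 = 2 * m + 3 from rfl]; push_cast; ring
  have hpQ : ((pInv (m + 2) 4 0 : ℕ) : ℚ) = 2 * (2 * ((m + 2 : ℕ) : ℚ) - 1) := by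
    rw [hp, show 2 * (m + 2) - 1 = 2 * m + 3 from rfl]; push_cast; ring
  have hE : EQ (m + 2) 4 0 = 4 * ((m + 2 : ℕ) : ℚ) ^ 2 *
      (8 * ((m + 2 : ℕ) : ℚ) ^ 4 - 20 * ((m + 2 : ℕ) : ℚ) ^ 3 + 10 * ((m + 2 : ℕ) : ℚ) ^ 2 + 5 * ((m + 2 : ℕ) : ℚ) - 3) := by
    unfold EQ ctildeQ
    rw [hdQ, hpQ]
    push_cast
    ring
  refine ⟨hd, hp, hE, ?_⟩
  rw [hE]
  have hn' : (2 : ℚ) ≤ ((m + 2 : ℕ) : ℚ) := by exact_mod_cast hn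
  have h1 : (0:ℚ) < ((m + 2 : ℕ) : ℚ)^2 := by positivity
  have h2 : (0:ℚ) < 8 * ((m + 2 : ℕ) : ℚ) ^ 4 - 20 * ((m + 2 : ℕ) : ℚ) ^ 3 + 10 * ((m + 2 : ℕ) : ℚ) ^ 2 + 5 * ((m + 2 : ℕ) : ℚ) - 3 := by
    nlinarith [sq_nonneg (((m + 2 : ℕ) : ℚ) - 2), sq_nonneg ((m + 2 : ℕ) : ℚ), mul_pos h1 h1]
  positivity
end
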